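/- For q ∈ [q_1, q_3] and all j ≥ 1, the point y_j = Π(0 1^j (10)^∞) lies in the interval [(q+q^2)/(q^4-1), 1/(q^2-q)]. -/

import Mathlib

/-- `y q j = Π(0 1^j (10)^∞)`: digit 0, then j ones, then (10) repeated. -/
noncomputable def yExp (q : ℝ) (j : ℕ) : ℝ :=
  ∑' i : ℕ, (if i = 0 then (0:ℝ) else if i ≤ j then 1
    else if (i - (j + 1)) % 2 = 0 then 1 else 0) / q ^ (i + 1)

/-- `z q j = Π(1 0^j (01)^∞)`: digit 1, then j zeros, then (01) repeated. -/
noncomputable def zExp (q : ℝ) (j : ℕ) : ℝ :=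
  ∑' i : ℕ, (if i = 0 then (1:ℝ) else if i ≤ j then 0
    else if (i - (j + 1)) % 2 = 0 then 0 else 1) / q ^ (i + 1)

/-!
The expansion `0 1^j (10)^∞` is `0 1^∞` with the digits at positions `j + 2, j + 4, …` set to
zero, so `y_j = 1/(q² - q) - 1/(q^(j+1) (q² - 1))`. Hence `y_j` increases to `1/(q² - q)`, and
already `y_1` exceeds `(q + q²)/(q⁴ - 1)`, by `(q - 1)/(q² (q⁴ - 1))`.
-/

lemma hasSum_ite_eq_zero_div_pow_succ {q : ℝ} (hq : 1 < q) :
    HasSum (fun i : ℕ => (if i = 0 then (0:ℝ) else 1) / q ^ (i + 1)) (1 / (q ^ 2 - q)) := by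
  have hq0 : 0 < q := by linarith
  have hgeom := (hasSum_geometric_of_lt_one (inv_nonneg.2 hq0.le)
    (inv_lt_one_of_one_lt₀ hq)).mul_left (q⁻¹ ^ 2)
  rw [show q⁻¹ ^ 2 * (1 - q⁻¹)⁻¹ = 1 / (q ^ 2 - q) by
    have : q - 1 ≠ 0 := by linarith
    field_simp] at hgeom
  rw [← hasSum_nat_add_iff' 1, Finset.sum_range_one, if_pos rfl, zero_div, sub_zero]
  refine hgeom.congr_fun fun n => ?_
  rw [if_neg n.succ_ne_zero, one_div, ← inv_pow]
  ring

lemma hasSum_ite_odd_tail_div_pow_succ {q : ℝ} (hq : 1 < q) (j : ℕ) :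
    HasSum
      (fun i : ℕ => (if j + 1 < i ∧ (i - (j + 1)) % 2 = 1 then (1:ℝ) else 0) / q ^ (i + 1))
      (1 / (q ^ (j + 1) * (q ^ 2 - 1))) := by
  have hq0 : 0 < q := by linarith
  have hgeom := (hasSum_geometric_of_lt_one (by positivity : 0 ≤ q⁻¹ ^ 2)
    (pow_lt_one₀ (by positivity) (inv_lt_one_of_one_lt₀ hq) two_ne_zero)).mul_left
      (q⁻¹ ^ (j + 3))
  rw [show q⁻¹ ^ (j + 3) * (1 - q⁻¹ ^ 2)⁻¹ = 1 / (q ^ (j + 1) * (q ^ 2 - 1)) by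
    have : q ^ 2 - 1 ≠ 0 := by nlinarith
    simp only [inv_pow]
    field_simp
    ring] at hgeom
  have hgap : Function.Injective (fun k : ℕ => 2 * k + j + 2) := fun a b h => by
    simp only at h; omega
  refine (hgap.hasSum_iff fun i hi => ?_).1 (hgeom.congr_fun fun k => ?_)
  · rw [if_neg, zero_div]
    rintro ⟨hji, hodd⟩
    refine hi ⟨(i - (j + 2)) / 2, ?_⟩
    dsimp only
    omega
  · have hk : j + 1 < 2 * k + j + 2 ∧ (2 * k + j + 2 - (j + 1)) % 2 = 1 := by omega
    rw [Function.comp_apply, if_pos hk, one_div, ← inv_pow, ← pow_mul, ← pow_add]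
    ring

theorem yExp_eq {q : ℝ} (hq : 1 < q) (j : ℕ) :
    yExp q j = 1 / (q ^ 2 - q) - 1 / (q ^ (j + 1) * (q ^ 2 - 1)) := by
  have hdiff := (hasSum_ite_eq_zero_div_pow_succ hq).sub (hasSum_ite_odd_tail_div_pow_succ hq j)
  refine (hdiff.congr_fun fun i => ?_).tsum_eq
  rw [← sub_div]
  congr 1
  split_ifs <;> norm_num <;> omega

lemma yExp_le {q : ℝ} (hq : 1 < q) (j : ℕ) : yExp q j ≤ 1 / (q ^ 2 - q) := by
  have : 0 < q ^ 2 - 1 := by nlinarith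
  rw [yExp_eq hq]
  exact sub_le_self _ (by positivity)

lemma le_yExp {q : ℝ} (hq : 1 < q) {j : ℕ} (hj : 1 ≤ j) :
    (q + q ^ 2) / (q ^ 4 - 1) ≤ yExp q j := by
  have hq2 : 0 < q ^ 2 - 1 := by nlinarith
  have hq4 : 0 < q ^ 4 - 1 := by nlinarith
  have hy₁ : 1 / (q ^ 2 - q) - 1 / (q ^ 2 * (q ^ 2 - 1)) - (q + q ^ 2) / (q ^ 4 - 1)
      = (q - 1) / (q ^ 2 * (q ^ 4 - 1)) := by
    have : q - 1 ≠ 0 := by linarith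
    rw [show q ^ 2 - q = q * (q - 1) by ring]
    field_simp
    ring
  calc (q + q ^ 2) / (q ^ 4 - 1) ≤ 1 / (q ^ 2 - q) - 1 / (q ^ 2 * (q ^ 2 - 1)) := by
        have : 0 ≤ (q - 1) / (q ^ 2 * (q ^ 4 - 1)) := div_nonneg (by linarith) (by positivity)
        linarith
    _ ≤ 1 / (q ^ 2 - q) - 1 / (q ^ (j + 1) * (q ^ 2 - 1)) := by
        gcongr
        exacts [hq.le, by omega]
    _ = yExp q j := (yExp_eq hq j).symm

theorem yj_in_interval_general (q1 q3 q : ℝ)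
    (hq1 : q1 ∈ Set.Ioo (1:ℝ) 2 ∧ q1^6 - q1^4 - q1^3 - 2*q1^2 - q1 - 1 = 0)
    (hq : q ∈ Set.Icc q1 q3) (j : ℕ) (hj : 1 ≤ j) :
    yExp q j ∈ Set.Icc ((q + q^2) / (q^4 - 1)) (1 / (q^2 - q)) := by
  have hq' : 1 < q := hq1.1.1.trans_le hq.1
  exact ⟨le_yExp hq' hj, yExp_le hq' j⟩

/-- for q ∈ [q₁,q₃] and j ≥ 1, y_j ∈ [(q+q²)/(q⁴-1), 1/(q²-q)]. -/
theorem yj_in_interval (q1 q3 q : ℝ)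
    (hq1 : q1 ∈ Set.Ioo (1:ℝ) 2 ∧ q1^6 - q1^4 - q1^3 - 2*q1^2 - q1 - 1 = 0)
    (hq3 : q3 ∈ Set.Ioo (1:ℝ) 2 ∧ q3^5 - q3^4 - q3^3 - q3 + 1 = 0)
    (hq : q ∈ Set.Icc q1 q3) (j : ℕ) (hj : 1 ≤ j) :
    yExp q j ∈ Set.Icc ((q + q^2) / (q^4 - 1)) (1 / (q^2 - q)) :=
  yj_in_interval_general q1 q3 q hq1 hq j hj
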